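/- arXiv:2404.18794 — 2 statements merged into one kernel-verified Lean document; each statement's English description precedes it below -/
import Mathlib

section
/- Let C ⊆ S³ be a set such that for all distinct α, β ∈ C, ⟨α,β⟩ ∈ {±1, ±1/2, 0}. Suppose moreover C is maximal with this property and spans ℝ⁴. Then for any α, β ∈ C, the reflection β' = β − 2⟨α,β⟩α satisfies ⟨β', γ⟩ ∈ {±1, ±1/2, 0} for all γ ∈ C. -/
/-!
The reflected inner product is `⟪β', γ⟫ = ⟪β, γ⟫ - 2⟪α, β⟫⟪α, γ⟫`. Doubling it gives
`2⟪β, γ⟫ - (2⟪α, β⟫)(2⟪α, γ⟫)`, an integer, so it is again a half-integer; and since the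
reflection `β'` is a unit vector, Cauchy–Schwarz bounds it by `1` in absolute value. The
half-integers in `[-1, 1]` are exactly `±1, ±1/2, 0`.
-/

open RealInnerProductSpace

lemma mem_halfIntegers_iff (x : ℝ) :
    x ∈ ({1, -1, 1/2, -1/2, 0} : Set ℝ) ↔ (∃ n : ℤ, 2 * x = n) ∧ |x| ≤ 1 := by
  constructor
  · rintro (rfl | rfl | rfl | rfl | rfl)
    exacts [⟨⟨2, by norm_num⟩, by norm_num⟩, ⟨⟨-2, by norm_num⟩, by norm_num⟩,
      ⟨⟨1, by norm_num⟩, by norm_num⟩, ⟨⟨-1, by norm_num⟩, by norm_num⟩,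
      ⟨⟨0, by norm_num⟩, by norm_num⟩]
  · rintro ⟨⟨n, hn⟩, hx⟩
    rw [abs_le] at hx
    have hn_lo : -2 ≤ n := by exact_mod_cast (by linarith : (-2 : ℝ) ≤ n)
    have hn_hi : n ≤ 2 := by exact_mod_cast (by linarith : (n : ℝ) ≤ 2)
    have hx_eq : x = n / 2 := by linarith
    interval_cases n <;> norm_num [hx_eq]

section Reflection

variable {E : Type*} [NormedAddCommGroup E] [InnerProductSpace ℝ E]

lemma inner_reflection_left (α β γ : E) :
    ⟪β - (2 * ⟪α, β⟫) • α, γ⟫ = ⟪β, γ⟫ - 2 * ⟪α, β⟫ * ⟪α, γ⟫ := by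
  rw [inner_sub_left, real_inner_smul_left]

lemma norm_reflection {α : E} (hα : ‖α‖ = 1) (β : E) :
    ‖β - (2 * ⟪α, β⟫) • α‖ = ‖β‖ := by
  have hsq : ‖β - (2 * ⟪α, β⟫) • α‖ ^ 2 = ‖β‖ ^ 2 := by
    rw [norm_sub_sq_real, real_inner_smul_right, norm_smul, hα, real_inner_comm α β,
      Real.norm_eq_abs, mul_one, sq_abs]
    ring
  exact (sq_eq_sq₀ (norm_nonneg _) (norm_nonneg _)).mp hsq

end Reflection

theorem reflection_preserves_inner_products_general
    (C : Set (EuclideanSpace ℝ (Fin 4)))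
    (T : Set ℝ) (hT : T = {1, -1, 1/2, -1/2, 0})
    (hCsub : ∀ x ∈ C, ‖x‖ = 1)
    (hCinner : ∀ x ∈ C, ∀ y ∈ C, x ≠ y → (inner ℝ x y : ℝ) ∈ T)
    (α : EuclideanSpace ℝ (Fin 4)) (hα : α ∈ C)
    (β : EuclideanSpace ℝ (Fin 4)) (hβ : β ∈ C) :
    ∀ γ ∈ C, (inner ℝ (β - (2 * (inner ℝ α β : ℝ)) • α) γ : ℝ) ∈ T := by
  subst hT
  have hC : ∀ x ∈ C, ∀ y ∈ C, ∃ n : ℤ, 2 * ⟪x, y⟫ = n := by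
    intro x hx y hy
    by_cases hxy : x = y
    · subst hxy
      exact ⟨2, by rw [real_inner_self_eq_norm_sq, hCsub x hx]; norm_num⟩
    · exact ((mem_halfIntegers_iff _).mp (hCinner x hx y hy hxy)).1
  intro γ hγ
  rw [mem_halfIntegers_iff]
  refine ⟨?_, ?_⟩
  · obtain ⟨a, ha⟩ := hC α hα β hβ
    obtain ⟨b, hb⟩ := hC β hβ γ hγ
    obtain ⟨c, hc⟩ := hC α hα γ hγ
    refine ⟨b - a * c, ?_⟩
    rw [inner_reflection_left]
    push_cast
    linear_combination hb - (2 * ⟪α, γ⟫) * ha - a * hc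
  · calc |⟪β - (2 * ⟪α, β⟫) • α, γ⟫| ≤ ‖β - (2 * ⟪α, β⟫) • α‖ * ‖γ‖ := abs_real_inner_le_norm _ _
      _ = 1 := by rw [norm_reflection (hCsub α hα), hCsub β hβ, hCsub γ hγ, one_mul]

theorem reflection_preserves_inner_products
    (C : Set (EuclideanSpace ℝ (Fin 4)))
    (T : Set ℝ) (hT : T = {1, -1, 1/2, -1/2, 0})
    (hCsub : ∀ x ∈ C, ‖x‖ = 1)
    (hCinner : ∀ x ∈ C, ∀ y ∈ C, x ≠ y → (inner ℝ x y : ℝ) ∈ T)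
    (hmax : ∀ S : Set (EuclideanSpace ℝ (Fin 4)),
      (∀ x ∈ S, ‖x‖ = 1) → (∀ x ∈ S, ∀ y ∈ S, x ≠ y → (inner ℝ x y : ℝ) ∈ T) →
      C ⊆ S → S = C)
    (hspan : Submodule.span ℝ C = ⊤)
    (α : EuclideanSpace ℝ (Fin 4)) (hα : α ∈ C)
    (β : EuclideanSpace ℝ (Fin 4)) (hβ : β ∈ C) :
    ∀ γ ∈ C, (inner ℝ (β - (2 * (inner ℝ α β : ℝ)) • α) γ : ℝ) ∈ T :=
  reflection_preserves_inner_products_general C T hT hCsub hCinner α hα β hβ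
end

section
/- If there exists a function on pairs of points of S³ showing that every 24-point subset C ⊆ S³ with pairwise inner products at most 1/2 has all pairwise inner products in {−1, −1/2, 0, 1/2}, then every 24-point subset of S³ has two distinct points with inner product at least 1/2; i.e., min over 24-point codes of the maximum pairwise inner product equals 1/2. -/
/-!
Suppose some 24-point code `C` had all inner products `< 1/2`. By the rigidity hypothesis they
then lie in `{-1, -1/2, 0}`, so some `x, z ∈ C` have `⟪x, z⟫ ∈ {-1/2, 0}` (at most one point of
`C` is `-x`), and `⟪x, w⟫ ≤ 0` for every other `w ∈ C`. Moving `x` by less than `1/4` along the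
great circle towards `z` raises `⟪x, z⟫` by a positive amount below `1/4`, keeps all inner
products with the remaining points `≤ 1/2`, and cannot land on another point of `C`. The new code
again satisfies the rigidity hypothesis, yet its inner product at `z` avoids `{-1, -1/2, 0, 1/2}`.
-/

open scoped RealInnerProductSpace

section

variable {E : Type*} [NormedAddCommGroup E] [InnerProductSpace ℝ E]

lemma real_inner_le_inner_add_norm_sub (x y : E) {w : E} (hw : ‖w‖ = 1) :
    ⟪y, w⟫ ≤ ⟪x, w⟫ + ‖y - x‖ := by
  have := real_inner_le_norm (y - x) w
  rw [inner_sub_left, hw, mul_one] at this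
  linarith

lemma one_lt_norm_sub_of_inner_nonpos {x y : E} (hx : ‖x‖ = 1) (hy : ‖y‖ = 1)
    (hxy : ⟪x, y⟫ ≤ 0) : 1 < ‖y - x‖ := by
  have : 2 ≤ ‖y - x‖ ^ 2 := by
    rw [norm_sub_sq_real, hx, hy, real_inner_comm]
    linarith
  nlinarith [norm_nonneg (y - x)]

lemma norm_smul_add_smul_sq {x u : E} (h : ⟪x, u⟫ = 0) (α β : ℝ) :
    ‖α • x + β • u‖ ^ 2 = α ^ 2 * ‖x‖ ^ 2 + β ^ 2 * ‖u‖ ^ 2 := by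
  rw [sq, norm_add_sq_eq_norm_sq_add_norm_sq_real (by simp [real_inner_smul_left,
    real_inner_smul_right, h])]
  simp only [norm_smul, Real.norm_eq_abs]
  nlinarith [sq_abs α, sq_abs β]

lemma exists_inner_eq_zero_inner_eq_norm_sq {x z : E} (hx : ‖x‖ = 1) (hz : ‖z‖ = 1) :
    ∃ u, ⟪x, u⟫ = 0 ∧ ⟪u, z⟫ = ‖u‖ ^ 2 ∧ ‖u‖ ^ 2 = 1 - ⟪x, z⟫ ^ 2 := by
  set a := ⟪x, z⟫
  set u := z - a • x
  have hxu : ⟪x, u⟫ = 0 := by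
    simp [u, a, inner_sub_right, real_inner_smul_right, hx]
  have huu : ‖u‖ ^ 2 = ⟪u, z⟫ := by
    rw [← real_inner_self_eq_norm_sq]
    calc ⟪u, u⟫ = ⟪u, z⟫ - a * ⟪x, u⟫ := by
          rw [real_inner_comm u x, ← real_inner_smul_right, ← inner_sub_right]
      _ = ⟪u, z⟫ := by rw [hxu, mul_zero, sub_zero]
  refine ⟨u, hxu, huu.symm, ?_⟩
  rw [huu]
  simp [u, inner_sub_left, real_inner_smul_left, hz]
  ring

lemma exists_norm_eq_one_norm_sub_lt_inner_lt {x z : E} (hx : ‖x‖ = 1) (hz : ‖z‖ = 1)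
    (hxz : |⟪x, z⟫| < 1) {ε : ℝ} (hε : 0 < ε) :
    ∃ y, ‖y‖ = 1 ∧ ‖y - x‖ < ε ∧ ⟪x, z⟫ < ⟪y, z⟫ := by
  obtain ⟨u, hxu, huz, hu⟩ := exists_inner_eq_zero_inner_eq_norm_sq hx hz
  set a := ⟪x, z⟫
  set b := ‖u‖
  have hb : 0 < b := by
    have : 0 < b ^ 2 := by rw [hu]; nlinarith [abs_nonneg a, sq_abs a]
    nlinarith [norm_nonneg u]
  set t := min (ε / 2) b
  have ht : 0 < t := lt_min (half_pos hε) hb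
  -- rational parametrisation of the unit circle
  set c := (1 - t ^ 2) / (1 + t ^ 2)
  set s := 2 * t / (1 + t ^ 2)
  have hcs : c ^ 2 + s ^ 2 = 1 := by
    simp only [c, s]; field_simp; ring
  have hsb : (s / b) ^ 2 * b ^ 2 = s ^ 2 := by
    rw [div_pow, div_mul_cancel₀ _ (pow_ne_zero 2 hb.ne')]
  refine ⟨c • x + (s / b) • u, ?_, ?_, ?_⟩
  · refine (pow_eq_one_iff_of_nonneg (norm_nonneg _) two_ne_zero).1 ?_
    rw [norm_smul_add_smul_sq hxu, hx, hsb, one_pow, mul_one, hcs]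
  · have hyx : c • x + (s / b) • u - x = (c - 1) • x + (s / b) • u := by module
    have hdist : (c - 1) ^ 2 + s ^ 2 = 4 * t ^ 2 / (1 + t ^ 2) := by
      simp only [c, s]; field_simp; ring
    have htε : 4 * t ^ 2 ≤ ε ^ 2 := by nlinarith [min_le_left (ε / 2) b]
    refine lt_of_pow_lt_pow_left₀ 2 hε.le ?_
    rw [hyx, norm_smul_add_smul_sq hxu, hx, hsb, one_pow, mul_one, hdist]
    exact (div_lt_self (by positivity) (by nlinarith)).trans_le htε
  · have hyz : ⟪c • x + (s / b) • u, z⟫ = c * a + s * b := by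
      rw [inner_add_left, real_inner_smul_left, real_inner_smul_left, huz]
      field_simp
      rfl
    have hgain : c * a + s * b - a = 2 * t * (b - t * a) / (1 + t ^ 2) := by
      simp only [c, s]; field_simp; ring
    have hta : t * a < b := by
      nlinarith [min_le_right (ε / 2) b, le_abs_self a, abs_nonneg a]
    have : 0 < 2 * t * (b - t * a) / (1 + t ^ 2) := by
      have := sub_pos.2 hta
      positivity
    linarith

lemma exists_ne_inner_ne_neg_one {C : Set E} (hC : ∀ w ∈ C, ‖w‖ = 1) (hcard : 2 < C.ncard)
    {x : E} (hx : x ∈ C) : ∃ z ∈ C, z ≠ x ∧ ⟪x, z⟫ ≠ -1 := by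
  by_contra! h
  have hsub : C ⊆ {x, -x} := fun z hz ↦ by
    by_cases hzx : z = x
    · exact .inl hzx
    · refine .inr ((inner_eq_neg_one_iff_of_norm_eq_one (𝕜 := ℝ) (hC z hz) (hC x hx)).1 ?_)
      rw [real_inner_comm]
      exact h z hz hzx
  have := (Set.ncard_le_ncard hsub).trans (Set.ncard_insert_le x ({-x} : Set E))
  rw [Set.ncard_singleton] at this
  omega

lemma pairwise_inner_le_insert_diff {C : Set E} (hC : ∀ w ∈ C, ‖w‖ = 1) {t : ℝ}
    (hCt : C.Pairwise fun v w ↦ ⟪v, w⟫ ≤ t) {x y : E} (hxC : ∀ w ∈ C, w ≠ x → ⟪x, w⟫ ≤ 0)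
    (hyx : ‖y - x‖ ≤ t) : (insert y (C \ {x})).Pairwise fun v w ↦ ⟪v, w⟫ ≤ t := by
  refine (hCt.mono Set.sdiff_subset).insert fun w ⟨hw, hwx⟩ _ ↦ ?_
  have hyw : ⟪y, w⟫ ≤ t := by
    linarith [real_inner_le_inner_add_norm_sub x y (hC w hw), hxC w hw hwx]
  exact ⟨hyw, real_inner_comm y w ▸ hyw⟩

end

theorem optimal_code_from_rigidity
    (H : ∀ C : Set (EuclideanSpace ℝ (Fin 4)),
      (∀ x ∈ C, ‖x‖ = 1) → C.ncard = 24 →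
      (∀ x ∈ C, ∀ y ∈ C, x ≠ y → (inner ℝ x y : ℝ) ≤ 1/2) →
      (∀ x ∈ C, ∀ y ∈ C, x ≠ y →
        (inner ℝ x y : ℝ) ∈ ({-1, -1/2, 0, 1/2} : Set ℝ))) :
    ∀ C : Set (EuclideanSpace ℝ (Fin 4)),
      (∀ x ∈ C, ‖x‖ = 1) → C.ncard = 24 →
      ∃ x ∈ C, ∃ y ∈ C, x ≠ y ∧ (1/2 : ℝ) ≤ (inner ℝ x y : ℝ) := by
  intro C hC hcard
  by_contra! hlt
  have hle : C.Pairwise fun v w ↦ ⟪v, w⟫ ≤ 1 / 2 := fun v hv w hw hvw ↦ (hlt v hv w hw hvw).le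
  have hval : ∀ v ∈ C, ∀ w ∈ C, v ≠ w → ⟪v, w⟫ = -1 ∨ ⟪v, w⟫ = -1 / 2 ∨ ⟪v, w⟫ = 0 := by
    intro v hv w hw hvw
    have := H C hC hcard hle v hv w hw hvw
    simp only [Set.mem_insert_iff, Set.mem_singleton_iff] at this
    exact this.imp_right (Or.imp_right (·.resolve_right (hlt v hv w hw hvw).ne))
  obtain ⟨x, hx⟩ := Set.nonempty_of_ncard_ne_zero (s := C) (by omega)
  obtain ⟨z, hz, hzx, hxz⟩ := exists_ne_inner_ne_neg_one hC (by omega) hx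
  have ha : ⟪x, z⟫ = -1 / 2 ∨ ⟪x, z⟫ = 0 := (hval x hx z hz hzx.symm).resolve_left hxz
  obtain ⟨y, hy, hyx, hzy⟩ := exists_norm_eq_one_norm_sub_lt_inner_lt (hC x hx) (hC z hz)
    (by rcases ha with h | h <;> norm_num [h]) (by norm_num : (0 : ℝ) < 1 / 4)
  have hyz := real_inner_le_inner_add_norm_sub x y (hC z hz)
  have hxC : ∀ w ∈ C, w ≠ x → ⟪x, w⟫ ≤ 0 := fun w hw hwx ↦ by
    rcases hval x hx w hw (Ne.symm hwx) with h | h | h <;> norm_num [h]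
  have hyC : y ∉ C := fun hyC ↦ by
    obtain rfl | hyx' := eq_or_ne y x
    · exact hzy.false
    · exact (one_lt_norm_sub_of_inner_nonpos (hC x hx) hy (hxC y hyC hyx')).not_gt (by linarith)
  have hC' : ∀ w ∈ insert y (C \ {x}), ‖w‖ = 1 := by
    rintro w (rfl | ⟨hw, -⟩)
    exacts [hy, hC w hw]
  have := H _ hC' (by rw [Set.ncard_exchange hyC hx, hcard])
    (pairwise_inner_le_insert_diff hC hle hxC (by linarith)) y (Set.mem_insert _ _) z
    (Set.mem_insert_of_mem _ ⟨hz, hzx⟩) (ne_of_mem_of_not_mem hz hyC).symm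
  simp only [Set.mem_insert_iff, Set.mem_singleton_iff] at this
  rcases ha with h | h <;> rcases this with h' | h' | h' | h' <;> linarith
end
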